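/- arXiv:1804.02556 — 8 statements merged into one kernel-verified Lean document; each statement's English description precedes it below -/
import Mathlib

section
/- Let H be an (n−k)×n matrix over L = F_{q^m}, all of whose entries lie in an F_q-subspace F of L, and let C = {c ∈ L^n : H·cᵀ = 0} be the associated LRPC code. Let F′ be an F_q-subspace of L such that (n−k)·dim_{F_q}(F·F′) < n·dim_{F_q}(F′). Then the set C′ = {c ∈ C : c_i ∈ F′ for all i ∈ {1,…,n}} is an F_q-subspace of L^n of F_q-dimension at least n·dim_{F_q}(F′) − (n−k)·dim_{F_q}(F·F′); in particular C contains nonzero codewords of rank weight at most dim_{F_q}(F′). -/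
set_option maxHeartbeats 1000000
set_option synthInstance.maxHeartbeats 200000

open Module

lemma finrank_pi_submodule_aux {R M ι : Type*} [Field R] [AddCommGroup M] [Module R M]
    [FiniteDimensional R M] [Fintype ι] [DecidableEq ι] (p : Submodule R M) :
    Module.finrank R ↥(Submodule.pi Set.univ (fun _ : ι => p))
      = Fintype.card ι * Module.finrank R ↥p := by
  let f : (ι → ↥p) →ₗ[R] (ι → M) :=
    LinearMap.pi (fun i => p.subtype.comp (LinearMap.proj i))
  have hinj : Function.Injective f := by
    intro x y hxy
    funext i
    exact Subtype.ext (congrFun hxy i)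
  have hrange : LinearMap.range f = Submodule.pi Set.univ (fun _ : ι => p) := by
    ext x
    simp only [LinearMap.mem_range, Submodule.mem_pi, Set.mem_univ, forall_true_left]
    constructor
    · rintro ⟨y, rfl⟩ i
      exact (y i).2
    · intro hx
      exact ⟨fun i => ⟨x i, hx i⟩, rfl⟩
  rw [← hrange, ← LinearEquiv.finrank_eq (LinearEquiv.ofInjective f hinj),
    Module.finrank_pi_fintype, Finset.sum_const, Finset.card_univ, smul_eq_mul]

/-- An LRPC code whose parity-check matrix has all entries in an
`F_q`-subspace `F` contains an `F_q`-subspace of codewords with coordinates in `F'`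
of dimension at least `n·dim F' − (n−k)·dim (F·F')`; in particular it contains
nonzero codewords of rank weight at most `dim F'`. -/
theorem stmt_0 {Fq L : Type*} [Field Fq] [Fintype Fq] [Field L] [Algebra Fq L]
    [FiniteDimensional Fq L]
    (n k : ℕ) (H : Matrix (Fin (n - k)) (Fin n) L)
    (F F' : Submodule Fq L)
    (hH : ∀ i j, H i j ∈ F)
    (hdim : (n - k) * Module.finrank Fq ↥(F * F') < n * Module.finrank Fq ↥F') :
    ∃ C' : Submodule Fq (Fin n → L),
      (C' : Set (Fin n → L)) =
        {c : Fin n → L | H.mulVec c = 0 ∧ ∀ i, c i ∈ F'} ∧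
      n * Module.finrank Fq ↥F' - (n - k) * Module.finrank Fq ↥(F * F')
        ≤ Module.finrank Fq ↥C' ∧
      ∃ c : Fin n → L, H.mulVec c = 0 ∧ c ≠ 0 ∧ (∀ i, c i ∈ F') ∧
        Module.finrank Fq ↥(Submodule.span Fq (Set.range c))
          ≤ Module.finrank Fq ↥F' := by
  classical
  set P : Submodule Fq (Fin n → L) := Submodule.pi Set.univ (fun _ => F') with hP
  set Q : Submodule Fq (Fin (n - k) → L) := Submodule.pi Set.univ (fun _ => F * F') with hQ
  set f : (Fin n → L) →ₗ[Fq] (Fin (n - k) → L) :=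
    (Matrix.mulVecLin H).restrictScalars Fq with hf
  set g : ↥P →ₗ[Fq] (Fin (n - k) → L) := f.domRestrict P with hg
  set C' : Submodule Fq (Fin n → L) := P ⊓ LinearMap.ker f with hC'
  have hset : (C' : Set (Fin n → L)) =
      {c : Fin n → L | H.mulVec c = 0 ∧ ∀ i, c i ∈ F'} := by
    ext c
    simp only [hC', Submodule.mem_inf, Submodule.mem_pi, Set.mem_univ, forall_true_left,
      LinearMap.mem_ker, hf, LinearMap.restrictScalars_apply, Matrix.mulVecLin_apply,
      Set.mem_setOf_eq, SetLike.mem_coe]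
    tauto
  -- ker g corresponds to C'
  have hker : C' = Submodule.map P.subtype (LinearMap.ker g) := by
    rw [hg, LinearMap.ker_domRestrict, Submodule.map_comap_subtype]
  have hkerrank : Module.finrank Fq ↥C' = Module.finrank Fq ↥(LinearMap.ker g) := by
    rw [hker]
    exact (LinearEquiv.finrank_eq
      (Submodule.equivMapOfInjective P.subtype P.injective_subtype (LinearMap.ker g))).symm
  -- range g ≤ Q
  have hrange : LinearMap.range g ≤ Q := by
    rintro _ ⟨⟨c, hc⟩, rfl⟩
    rw [Submodule.mem_pi]
    intro i _
    simp only [hg, LinearMap.domRestrict_apply, hf, LinearMap.restrictScalars_apply,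
      Matrix.mulVecLin_apply]
    have : H.mulVec c i = ∑ j, H i j * c j := by
      simp [Matrix.mulVec, dotProduct]
    rw [this]
    apply Submodule.sum_mem
    intro j _
    exact Submodule.mul_mem_mul (hH i j) (Submodule.mem_pi.mp hc j (Set.mem_univ j))
  have hQrank : Module.finrank Fq ↥Q = (n - k) * Module.finrank Fq ↥(F * F') := by
    rw [hQ, finrank_pi_submodule_aux, Fintype.card_fin]
  have hPrank : Module.finrank Fq ↥P = n * Module.finrank Fq ↥F' := by
    rw [hP, finrank_pi_submodule_aux, Fintype.card_fin]
  have hrn : Module.finrank Fq ↥(LinearMap.range g) + Module.finrank Fq ↥(LinearMap.ker g)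
      = Module.finrank Fq ↥P := LinearMap.finrank_range_add_finrank_ker g
  have hrle : Module.finrank Fq ↥(LinearMap.range g) ≤ (n - k) * Module.finrank Fq ↥(F * F') := by
    rw [← hQrank]
    exact Submodule.finrank_mono hrange
  have hbound : n * Module.finrank Fq ↥F' - (n - k) * Module.finrank Fq ↥(F * F')
      ≤ Module.finrank Fq ↥C' := by
    omega
  refine ⟨C', hset, hbound, ?_⟩
  have hpos : 0 < Module.finrank Fq ↥C' := by omega
  have : Nontrivial ↥C' := Module.finrank_pos_iff.mp hpos
  obtain ⟨x, hx⟩ := exists_ne (0 : ↥C')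
  have hxmem : (x : Fin n → L) ∈ ({c : Fin n → L | H.mulVec c = 0 ∧ ∀ i, c i ∈ F'}) := by
    rw [← hset]; exact x.2
  refine ⟨x, hxmem.1, ?_, hxmem.2, ?_⟩
  · intro h0
    exact hx (Subtype.ext h0)
  · apply Submodule.finrank_mono
    rw [Submodule.span_le]
    rintro _ ⟨i, rfl⟩
    exact hxmem.2 i
end

section
/- Let H be a full-rank (n−k)×n matrix over L = F_{q^m} all of whose entries lie in an F_q-subspace F of L with dim_{F_q} F = d, let R be an (n−k)×t matrix over L, let P be an invertible (n+t)×(n+t) matrix with entries in F_q, and let Q be an invertible (n−k)×(n−k) matrix over L. Let H_pub = Q·[H | R]·P and let C_pub = {c ∈ L^{n+t} : H_pub·cᵀ = 0}. Let F′ ⊆ F be an F_q-subspace of dimension 2 and set C′_pub = {c ∈ C_pub : c_i ∈ F′ for all i ∈ {1,…,n+t}}. If n = (n−k)·d, then C′_pub is an F_q-subspace of L^{n+t} of F_q-dimension at least n/d. -/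
/-!
Vectors `x ∈ F'ⁿ` have syndromes `H x ∈ (F' F)ⁿ⁻ᵏ`, and the syndrome map is `F_q`-linear. Writing
`F' = ⟨f₁, f₂⟩`, we get `F' F = f₁ F + f₂ F` with `f₁ f₂` in both summands, so
`dim F' F ≤ 2d - 1`. As `dim F'ⁿ = 2n = (n - k) · 2d`, the kernel has dimension at least
`n - k = n / d`. Padding with zeros on the columns of `R`, multiplying by `Q` on the left and
applying `P⁻¹`, whose entries lie in `F_q` and therefore keep coordinates in `F'`, embeds this
kernel into `C'_pub`.
-/

open Module Pointwise

namespace Submodule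

variable {K L : Type*} [Field K] [Field L] [Algebra K L] [FiniteDimensional K L]

theorem finrank_span_pair_mul_add_one_le {F : Submodule K L} {f₁ f₂ : L} (hf₁ : f₁ ∈ F)
    (hf₂ : f₂ ∈ F) (hf₁₀ : f₁ ≠ 0) (hf₂₀ : f₂ ≠ 0) :
    finrank K ↥(span K {f₁, f₂} * F) + 1 ≤ 2 * finrank K F := by
  have hsup : span K {f₁, f₂} * F = f₁ • F ⊔ f₂ • F := by
    rw [span_insert, sup_mul, span_singleton_mul, span_singleton_mul]
  have hinf : 0 < finrank K ↥(f₁ • F ⊓ f₂ • F) := by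
    refine finrank_pos_iff_exists_ne_zero.mpr ⟨⟨f₁ * f₂, mem_inf.mpr ⟨?_, ?_⟩⟩, ?_⟩
    · exact smul_mem_pointwise_smul f₂ f₁ F hf₂
    · exact mul_comm f₂ f₁ ▸ smul_mem_pointwise_smul f₁ f₂ F hf₁
    · simpa [← Subtype.coe_ne_coe] using mul_ne_zero hf₁₀ hf₂₀
  have h₁ : finrank K ↥(f₁ • F) ≤ finrank K F := finrank_map_le _ _
  have h₂ : finrank K ↥(f₂ • F) ≤ finrank K F := finrank_map_le _ _
  have := finrank_sup_add_finrank_inf_eq (f₁ • F) (f₂ • F)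
  rw [hsup]
  omega

theorem exists_eq_span_pair_of_finrank_eq_two {V : Submodule K L} (hV : finrank K V = 2) :
    ∃ f₁ f₂ : L, f₁ ∈ V ∧ f₂ ∈ V ∧ f₁ ≠ 0 ∧ f₂ ≠ 0 ∧ V = span K {f₁, f₂} := by
  let b := finBasisOfFinrankEq K V hV
  refine ⟨b 0, b 1, (b 0).2, (b 1).2, by simpa using b.ne_zero 0, by simpa using b.ne_zero 1, ?_⟩
  have hrange : Set.range (V.subtype ∘ b) = {(b 0 : L), (b 1 : L)} := by
    ext; simp [Fin.exists_fin_two, eq_comm]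
  rw [← hrange, Set.range_comp, span_image, b.span_eq, map_subtype_top]

theorem finrank_mul_add_one_le_of_finrank_eq_two {V F : Submodule K L} (hVF : V ≤ F)
    (hV : finrank K V = 2) : finrank K ↥(V * F) + 1 ≤ 2 * finrank K F := by
  obtain ⟨f₁, f₂, hf₁, hf₂, hf₁₀, hf₂₀, rfl⟩ := exists_eq_span_pair_of_finrank_eq_two hV
  exact finrank_span_pair_mul_add_one_le (hVF hf₁) (hVF hf₂) hf₁₀ hf₂₀

end Submodule

namespace Matrix

variable {K L : Type*} [Field K] [Field L] [Algebra K L] {m n p : Type*} [Fintype n]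

def subcode (A : Matrix m n L) (V : Submodule K L) : Submodule K (n → L) :=
  Submodule.pi Set.univ (fun _ => V) ⊓ LinearMap.ker (A.mulVecLin.restrictScalars K)

theorem mem_subcode {A : Matrix m n L} {V : Submodule K L} {c : n → L} :
    c ∈ A.subcode V ↔ A *ᵥ c = 0 ∧ ∀ i, c i ∈ V := by
  simp [subcode, and_comm]

theorem subcode_le_mul_left [Fintype m] (Q : Matrix p m L) (A : Matrix m n L)
    (V : Submodule K L) : A.subcode V ≤ (Q * A).subcode V := fun c hc => by
  rw [mem_subcode] at hc ⊢
  exact ⟨by rw [← mulVec_mulVec, hc.1, mulVec_zero], hc.2⟩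

variable [FiniteDimensional K L]

theorem card_mul_finrank_le_finrank_subcode_add [Fintype m] {A : Matrix m n L}
    {V F : Submodule K L} (hA : ∀ i j, A i j ∈ F) :
    Fintype.card n * finrank K V ≤
      finrank K (A.subcode V) + Fintype.card m * finrank K ↥(V * F) := by
  let ι := V.subtype.compLeft n
  let φ := A.mulVecLin.restrictScalars K ∘ₗ ι
  have hrange : LinearMap.range φ ≤ LinearMap.range ((V * F).subtype.compLeft m) := by
    rintro _ ⟨x, rfl⟩
    refine ⟨fun i => ⟨∑ j, A i j * x j, (V * F).sum_mem fun j _ => ?_⟩, rfl⟩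
    exact mul_comm (x j : L) (A i j) ▸ Submodule.mul_mem_mul (x j).2 (hA i j)
  have hι : Function.Injective ι := fun x y h => funext fun j => Subtype.ext (congrFun h j)
  have hker : finrank K (LinearMap.ker φ) ≤ finrank K (A.subcode V) :=
    LinearMap.finrank_le_finrank_of_injective (f := ι.restrict fun x hx => mem_subcode.mpr
      ⟨hx, fun j => (x j).2⟩) fun x y h => Subtype.ext (hι (congrArg Subtype.val h))
  have hrk := φ.finrank_range_add_finrank_ker
  have hrange' := (Submodule.finrank_mono hrange).trans (LinearMap.finrank_range_le _)
  simp only [finrank_pi_fintype, Finset.sum_const, Finset.card_univ, smul_eq_mul] at hrk hrange'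
  omega

variable [Fintype p]

theorem finrank_subcode_le_of_injective {A : Matrix m n L} {B : Matrix m p L}
    {V : Submodule K L} (f : (n → L) →ₗ[K] (p → L)) (hf : Function.Injective f)
    (hAB : ∀ c ∈ A.subcode V, f c ∈ B.subcode V) :
    finrank K (A.subcode V) ≤ finrank K (B.subcode V) :=
  LinearMap.finrank_le_finrank_of_injective (f := f.restrict hAB) fun _ _ h =>
    Subtype.ext (hf (congrArg Subtype.val h))

theorem finrank_subcode_le_fromCols (A : Matrix m n L) (B : Matrix m p L) (V : Submodule K L) :
    finrank K (A.subcode V) ≤ finrank K ((fromCols A B).subcode V) := by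
  refine finrank_subcode_le_of_injective
    ((LinearEquiv.sumArrowLequivProdArrow n p K L).symm.toLinearMap ∘ₗ LinearMap.inl K _ _)
    (fun c c' h => funext fun i => by simpa using congrFun h (Sum.inl i)) fun c hc => ?_
  rw [mem_subcode] at hc ⊢
  have hc0 : (LinearEquiv.sumArrowLequivProdArrow n p K L).symm (c, 0) = Sum.elim c 0 := rfl
  simp only [LinearMap.coe_comp, LinearEquiv.coe_coe, Function.comp_apply, LinearMap.inl_apply,
    hc0]
  refine ⟨by simp [hc.1], ?_⟩
  rintro (i | i) <;> simp [hc.2, V.zero_mem]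

theorem finrank_subcode_le_submatrix (A : Matrix m n L) (e : p ≃ n) (V : Submodule K L) :
    finrank K (A.subcode V) ≤ finrank K ((A.submatrix id e).subcode V) := by
  refine finrank_subcode_le_of_injective (LinearMap.funLeft K L e)
    (LinearMap.funLeft_injective_of_surjective _ _ _ e.surjective) fun c hc => ?_
  rw [mem_subcode] at hc ⊢
  refine ⟨?_, fun i => hc.2 (e i)⟩
  simp [LinearMap.funLeft, submatrix_mulVec_equiv, Function.comp_def, hc.1]

theorem finrank_subcode_le_mul_map_algebraMap [DecidableEq n] (A : Matrix m n L)
    {P : Matrix n n K} (hP : IsUnit P) (V : Submodule K L) :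
    finrank K (A.subcode V) ≤ finrank K ((A * P.map (algebraMap K L)).subcode V) := by
  have hPinv : P.map (algebraMap K L) * P⁻¹.map (algebraMap K L) = 1 := by
    rw [← Matrix.map_mul, mul_nonsing_inv P ((isUnit_iff_isUnit_det P).mp hP),
      Matrix.map_one _ (map_zero _) (map_one _)]
  have hcancel (c : n → L) : P.map (algebraMap K L) *ᵥ (P⁻¹.map (algebraMap K L) *ᵥ c) = c := by
    rw [mulVec_mulVec, hPinv, one_mulVec]
  refine finrank_subcode_le_of_injective ((P⁻¹.map (algebraMap K L)).mulVecLin.restrictScalars K)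
    (fun c c' h => by simpa [hcancel] using congrArg (P.map (algebraMap K L) *ᵥ ·) h)
    fun c hc => ?_
  rw [mem_subcode] at hc ⊢
  refine ⟨by simp [← mulVec_mulVec, hcancel, hc.1], fun i => ?_⟩
  simp only [LinearMap.restrictScalars_apply, mulVecLin_apply, mulVec, dotProduct, map_apply,
    ← Algebra.smul_def]
  exact V.sum_mem fun j _ => V.smul_mem _ (hc.2 j)

end Matrix

theorem stmt_1_general {Fq L : Type*} [Field Fq] [Field L] [Algebra Fq L]
    [FiniteDimensional Fq L]
    (n k t d : ℕ)
    (H : Matrix (Fin (n - k)) (Fin n) L)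
    (R : Matrix (Fin (n - k)) (Fin t) L)
    (P : Matrix (Fin (n + t)) (Fin (n + t)) Fq)
    (Q : Matrix (Fin (n - k)) (Fin (n - k)) L)
    (F F' : Submodule Fq L)
    (hH : ∀ i j, H i j ∈ F)
    (hFd : Module.finrank Fq ↥F = d)
    (hP : IsUnit P)
    (hF'F : F' ≤ F) (hF'2 : Module.finrank Fq ↥F' = 2)
    (hnd : n = (n - k) * d)
    (Hpub : Matrix (Fin (n - k)) (Fin (n + t)) L)
    (hHpub : Hpub =
      Q * (Matrix.fromCols H R).submatrix id finSumFinEquiv.symm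
        * P.map (algebraMap Fq L)) :
    ∃ C' : Submodule Fq (Fin (n + t) → L),
      (C' : Set (Fin (n + t) → L)) =
        {c : Fin (n + t) → L | Hpub.mulVec c = 0 ∧ ∀ i, c i ∈ F'} ∧
      n / d ≤ Module.finrank Fq ↥C' := by
  refine ⟨Hpub.subcode F', Set.ext fun c => Matrix.mem_subcode, ?_⟩
  have hd : 2 ≤ d := hFd ▸ hF'2 ▸ Submodule.finrank_mono hF'F
  have hmul := Submodule.finrank_mul_add_one_le_of_finrank_eq_two hF'F hF'2
  have hker := Matrix.card_mul_finrank_le_finrank_subcode_add (V := F') hH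
  simp only [Fintype.card_fin, hF'2, hFd] at hmul hker
  have hHsub : n - k ≤ finrank Fq (H.subcode F') := by nlinarith
  rw [Nat.div_eq_of_eq_mul_left (by omega) hnd, hHpub]
  calc n - k ≤ finrank Fq (H.subcode F') := hHsub
    _ ≤ finrank Fq ((Matrix.fromCols H R).subcode F') := H.finrank_subcode_le_fromCols R F'
    _ ≤ finrank Fq (((Matrix.fromCols H R).submatrix id finSumFinEquiv.symm).subcode F') :=
      Matrix.finrank_subcode_le_submatrix _ _ F'
    _ ≤ finrank Fq ((Q * (Matrix.fromCols H R).submatrix id finSumFinEquiv.symm).subcode F') :=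
      Submodule.finrank_mono (Matrix.subcode_le_mul_left _ _ F')
    _ ≤ _ := Matrix.finrank_subcode_le_mul_map_algebraMap _ hP F'

/-- The public code of RankSign, built from an augmented LRPC code
with parameters satisfying `n = (n−k)·d`, contains an `F_q`-subspace of codewords
with all coordinates in a 2-dimensional subspace `F' ⊆ F`, of dimension at least `n/d`. -/
theorem stmt_1 {Fq L : Type*} [Field Fq] [Fintype Fq] [Field L] [Algebra Fq L]
    [FiniteDimensional Fq L]
    (n k t d : ℕ) (hkn : k ≤ n)
    (H : Matrix (Fin (n - k)) (Fin n) L)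
    (R : Matrix (Fin (n - k)) (Fin t) L)
    (P : Matrix (Fin (n + t)) (Fin (n + t)) Fq)
    (Q : Matrix (Fin (n - k)) (Fin (n - k)) L)
    (F F' : Submodule Fq L)
    (hHrank : H.rank = n - k)
    (hH : ∀ i j, H i j ∈ F)
    (hFd : Module.finrank Fq ↥F = d)
    (hP : IsUnit P) (hQ : IsUnit Q)
    (hF'F : F' ≤ F) (hF'2 : Module.finrank Fq ↥F' = 2)
    (hnd : n = (n - k) * d)
    (Hpub : Matrix (Fin (n - k)) (Fin (n + t)) L)
    (hHpub : Hpub =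
      Q * (Matrix.fromCols H R).submatrix id finSumFinEquiv.symm
        * P.map (algebraMap Fq L)) :
    ∃ C' : Submodule Fq (Fin (n + t) → L),
      (C' : Set (Fin (n + t) → L)) =
        {c : Fin (n + t) → L | Hpub.mulVec c = 0 ∧ ∀ i, c i ∈ F'} ∧
      n / d ≤ Module.finrank Fq ↥C' :=
  stmt_1_general n k t d H R P Q F F' hH hFd hP hF'F hF'2 hnd Hpub hHpub
end

section
/- Let E₂ be a k×N matrix over L = F_{q^m} all of whose entries lie in an F_q-subspace F of L with dim_{F_q} F = w. Then the set S = { e ∈ F_q^N : E₂·eᵀ = 0 } is an F_q-subspace of F_q^N of dimension at least N − w·k. -/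
/-- If all entries of the `k×N` matrix `E₂` over `L` lie in an
`F_q`-subspace `F` of dimension `w`, then `S = {e ∈ F_q^N : E₂·eᵀ = 0}` is an
`F_q`-subspace of `F_q^N` of dimension at least `N − w·k`. -/
theorem stmt_4 {Fq L : Type*} [Field Fq] [Fintype Fq] [Field L] [Algebra Fq L]
    [FiniteDimensional Fq L]
    (k N w : ℕ)
    (E2 : Matrix (Fin k) (Fin N) L)
    (F : Submodule Fq L)
    (hE : ∀ i j, E2 i j ∈ F)
    (hF : Module.finrank Fq ↥F = w) :
    ∃ S : Submodule Fq (Fin N → Fq),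
      (S : Set (Fin N → Fq)) =
        {e : Fin N → Fq | E2.mulVec (fun j => algebraMap Fq L (e j)) = 0} ∧
      N - w * k ≤ Module.finrank Fq ↥S := by
  have hmem : ∀ (e : Fin N → Fq) (i : Fin k),
      (∑ j, E2 i j * algebraMap Fq L (e j)) ∈ F := by
    intro e i
    refine Submodule.sum_mem F fun j _ => ?_
    have : E2 i j * algebraMap Fq L (e j) = e j • E2 i j := by
      rw [Algebra.smul_def, mul_comm]
    rw [this]
    exact F.smul_mem _ (hE i j)
  set φ : (Fin N → Fq) →ₗ[Fq] (Fin k → F) :=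
    { toFun := fun e i => ⟨∑ j, E2 i j * algebraMap Fq L (e j), hmem e i⟩
      map_add' := by
        intro x y
        funext i
        apply Subtype.ext
        simp [mul_add, Finset.sum_add_distrib]
      map_smul' := by
        intro c x
        funext i
        apply Subtype.ext
        simp [Finset.mul_sum, Algebra.smul_def]
        congr 1
        funext j
        ring } with hφ
  refine ⟨LinearMap.ker φ, ?_, ?_⟩
  · ext e
    simp only [SetLike.mem_coe, LinearMap.mem_ker, Set.mem_setOf_eq, hφ]
    constructor
    · intro h
      funext i
      have := congrFun h i
      simpa [Matrix.mulVec, dotProduct, Subtype.ext_iff] using this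
    · intro h
      funext i
      have := congrFun h i
      apply Subtype.ext
      simpa [Matrix.mulVec, dotProduct] using this
  · have hrn := LinearMap.finrank_range_add_finrank_ker φ
    have hdom : Module.finrank Fq (Fin N → Fq) = N := by simp
    have hcod : Module.finrank Fq (Fin k → F) = k * w := by
      rw [Module.finrank_pi_fintype]
      simp [hF, Finset.sum_const]
    have hle : Module.finrank Fq (LinearMap.range φ) ≤ k * w := by
      rw [← hcod]
      exact Submodule.finrank_le _
    rw [hdom] at hrn
    have hcomm : w * k = k * w := Nat.mul_comm w k
    omega
end

section
/- Let F be an F_q-subspace of L = F_{q^m} with dim_{F_q} F = 2 and 1 ∈ F, and suppose n = 2k. Let D be a k-dimensional L-subspace of L^{n+t} that is spanned (over L) by k vectors all of whose coordinates lie in F. Let D^⊥ = { x ∈ L^{n+t} : Σ_i x_i c_i = 0 for all c ∈ D } be its dual with respect to the standard bilinear form; D^⊥ has L-dimension n+t−k. Then the set { c ∈ D^⊥ : Supp(c) ⊆ F_q } is an F_q-subspace of dimension at least t, and the set { c ∈ D^⊥ : Supp(c) ⊆ F } is an F_q-subspace of dimension at least n−k+2t. -/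
/-!
Let `v₁, …, v_k` be the generators of `D` with coordinates in `F`. The map `c ↦ (c ⬝ᵥ v_j)_j`
is `F_q`-linear and sends `P^N` into `(F·P)^k` for every `F_q`-subspace `P` of `L`; its kernel
on `P^N` is the set of codewords of `D^⊥` with support in `P`, so that set has dimension at
least `N·dim P − k·dim (F·P)`. For `P = F_q` this is `N − 2k = t`. For `P = F`, writing
`F = ⟨1, α⟩` gives `F·F ⊆ ⟨1, α, α²⟩`, hence the bound `2N − 3k = n − k + 2t`.
The `L`-dimension of `D^⊥` is rank–nullity for the matrix with rows `v_j`.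
-/

open Module Submodule Matrix

theorem Submodule.finrank_pi_univ {K ι : Type*} {M : ι → Type*} [Field K] [Fintype ι]
    [∀ i, AddCommGroup (M i)] [∀ i, Module K (M i)] (p : ∀ i, Submodule K (M i))
    [∀ i, FiniteDimensional K (p i)] :
    finrank K (pi Set.univ p) = ∑ i, finrank K (p i) := by
  have hrange : LinearMap.range (LinearMap.piMap fun i => (p i).subtype) = pi Set.univ p := by
    ext x
    simp only [LinearMap.mem_range, mem_pi, Set.mem_univ, forall_const]
    exact ⟨fun ⟨y, hy⟩ i => hy ▸ (y i).2, fun h => ⟨fun i => ⟨x i, h i⟩, rfl⟩⟩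
  rw [← hrange, LinearMap.finrank_range_of_inj, finrank_pi_fintype]
  exact fun y z h => funext fun i => Subtype.ext (congrFun h i)

theorem Submodule.finrank_le_finrank_ker_inf_add {K M M' : Type*} [Field K] [AddCommGroup M]
    [Module K M] [AddCommGroup M'] [Module K M'] (f : M →ₗ[K] M') {A : Submodule K M}
    {B : Submodule K M'} [FiniteDimensional K A] [FiniteDimensional K B] (h : A.map f ≤ B) :
    finrank K A ≤ finrank K ↥(LinearMap.ker f ⊓ A) + finrank K B := by
  have hker :
      finrank K (LinearMap.ker (f.domRestrict A)) = finrank K ↥(LinearMap.ker f ⊓ A) := by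
    rw [LinearMap.ker_domRestrict, ← finrank_map_subtype_eq, map_comap_subtype, inf_comm]
  have hrank := (f.domRestrict A).finrank_range_add_finrank_ker
  rw [LinearMap.range_domRestrict, hker] at hrank
  have := finrank_mono h
  omega

theorem Matrix.forall_mem_span_row_dotProduct_eq_zero_iff {R m n : Type*} [CommRing R]
    [Fintype n] (A : Matrix m n R) (x : n → R) :
    (∀ c ∈ span R (Set.range A.row), x ⬝ᵥ c = 0) ↔ A *ᵥ x = 0 := by
  constructor
  · intro h
    ext j
    rw [mulVec, dotProduct_comm]
    exact h _ (subset_span ⟨j, rfl⟩)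
  · intro h c hc
    induction hc using Submodule.span_induction with
    | mem c hc =>
      obtain ⟨j, rfl⟩ := hc
      rw [dotProduct_comm]
      exact congrFun h j
    | zero => exact dotProduct_zero x
    | add c d _ _ hc hd => rw [dotProduct_add, hc, hd, add_zero]
    | smul a c _ hc => rw [dotProduct_smul, hc, smul_zero]

theorem Matrix.rank_add_finrank_ker_mulVecLin {R m n : Type*} [Field R] [Fintype n]
    (A : Matrix m n R) :
    A.rank + finrank R (LinearMap.ker A.mulVecLin) = Fintype.card n := by
  rw [rank, LinearMap.finrank_range_add_finrank_ker, finrank_fintype_fun_eq_card]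

section

variable {K L : Type*} [Field K] [Field L] [Algebra K L]

theorem Submodule.exists_eq_span_one_pair {F : Submodule K L} (hF : finrank K F = 2)
    (h1 : (1 : L) ∈ F) : ∃ α : L, F = span K {1, α} := by
  have : FiniteDimensional K F := .of_finrank_pos (by omega)
  have hlt : K ∙ (1 : L) < F := by
    refine lt_of_le_of_ne ((span_singleton_le_iff_mem _ _).mpr h1) fun h => ?_
    rw [← h, finrank_span_singleton one_ne_zero] at hF
    omega
  obtain ⟨α, hαF, hα1⟩ := SetLike.exists_of_lt hlt
  have hle : span K {1, α} ≤ F := by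
    rw [span_le]
    rintro x (rfl | rfl)
    exacts [h1, hαF]
  have : FiniteDimensional K (span K {1, α}) := finiteDimensional_of_le hle
  have hlt' : K ∙ (1 : L) < span K {1, α} :=
    lt_of_le_of_ne (span_mono (by simp)) fun h => hα1 (h ▸ subset_span (by simp))
  have hdim := finrank_lt_finrank_of_lt hlt'
  rw [finrank_span_singleton one_ne_zero] at hdim
  exact ⟨α, (eq_of_le_of_finrank_le hle (by omega)).symm⟩

theorem Submodule.finrank_mul_self_le_three {F : Submodule K L} (hF : finrank K F = 2)
    (h1 : (1 : L) ∈ F) : finrank K ↥(F * F) ≤ 3 := by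
  classical
  obtain ⟨α, rfl⟩ := exists_eq_span_one_pair hF h1
  have hsq : span K {1, α} * span K {1, α} ≤ span K ({1, α, α * α} : Finset L) := by
    rw [span_mul_span, span_le]
    rintro _ ⟨a, ha, b, hb, rfl⟩
    apply subset_span
    rcases ha with rfl | rfl <;> rcases hb with rfl | rfl <;> simp
  exact (finrank_mono hsq).trans ((finrank_span_finset_le_card _).trans Finset.card_le_three)

variable {ι κ : Type*}

/-- The codewords `c ∈ C` with `Supp c ⊆ P`. -/
def Submodule.subspaceSubcode (C : Submodule L (ι → L)) (P : Submodule K L) :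
    Submodule K (ι → L) :=
  C.restrictScalars K ⊓ pi Set.univ fun _ => P

theorem Submodule.coe_subspaceSubcode (C : Submodule L (ι → L)) (P : Submodule K L) :
    (C.subspaceSubcode P : Set (ι → L)) = {c | c ∈ C ∧ ∀ i, c i ∈ P} := by
  ext
  simp [subspaceSubcode]

variable [Fintype ι]

theorem Matrix.map_mulVecLin_pi_le_pi_mul (v : Matrix κ ι L) {F : Submodule K L}
    (hv : ∀ j i, v j i ∈ F) (P : Submodule K L) :
    (pi Set.univ fun _ : ι => P).map (v.mulVecLin.restrictScalars K) ≤
      pi Set.univ fun _ : κ => F * P := by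
  rintro _ ⟨c, hc, rfl⟩ j -
  exact sum_mem fun i _ => mul_mem_mul (hv j i) (hc i trivial)

variable [FiniteDimensional K L] [Fintype κ]

theorem Matrix.card_mul_finrank_le_finrank_subspaceSubcode (v : Matrix κ ι L) {F : Submodule K L}
    (hv : ∀ j i, v j i ∈ F) (P : Submodule K L) :
    Fintype.card ι * finrank K P ≤
      finrank K ((LinearMap.ker v.mulVecLin).subspaceSubcode P) +
        Fintype.card κ * finrank K ↥(F * P) := by
  have h := finrank_le_finrank_ker_inf_add _ (v.map_mulVecLin_pi_le_pi_mul hv P)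
  simp only [finrank_pi_univ, Finset.sum_const, Finset.card_univ, smul_eq_mul,
    LinearMap.ker_restrictScalars] at h
  exact h

end

theorem stmt_5_general {Fq L : Type*} [Field Fq] [Field L] [Algebra Fq L]
    [FiniteDimensional Fq L]
    (n k t : ℕ) (hn2k : n = 2 * k)
    (F : Submodule Fq L) (hF2 : Module.finrank Fq ↥F = 2) (h1F : (1 : L) ∈ F)
    (D : Submodule L (Fin (n + t) → L))
    (hDk : Module.finrank L ↥D = k)
    (hDspan : ∃ v : Fin k → (Fin (n + t) → L),
      (∀ i j, v i j ∈ F) ∧ Submodule.span L (Set.range v) = D)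
    (Dperp : Submodule L (Fin (n + t) → L))
    (hDperp : (Dperp : Set (Fin (n + t) → L)) =
      {x : Fin (n + t) → L | ∀ c ∈ D, ∑ i, x i * c i = 0}) :
    Module.finrank L ↥Dperp = n + t - k ∧
    (∃ S1 : Submodule Fq (Fin (n + t) → L),
      (S1 : Set (Fin (n + t) → L)) =
        {c : Fin (n + t) → L | c ∈ Dperp ∧ ∀ i, c i ∈ (1 : Submodule Fq L)} ∧
      t ≤ Module.finrank Fq ↥S1) ∧
    (∃ S2 : Submodule Fq (Fin (n + t) → L),
      (S2 : Set (Fin (n + t) → L)) =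
        {c : Fin (n + t) → L | c ∈ Dperp ∧ ∀ i, c i ∈ F} ∧
      n - k + 2 * t ≤ Module.finrank Fq ↥S2) := by
  obtain ⟨v, hvF, rfl⟩ := hDspan
  have hker : Dperp = LinearMap.ker (of v).mulVecLin := SetLike.coe_injective <| by
    rw [hDperp]
    ext x
    exact (of v).forall_mem_span_row_dotProduct_eq_zero_iff x
  subst hker
  have hrank := (of v).rank_add_finrank_ker_mulVecLin
  rw [rank_eq_finrank_span_row] at hrank
  change finrank L (span L (Set.range v)) + _ = _ at hrank
  have hone : finrank Fq ↥(1 : Submodule Fq L) = 1 := by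
    rw [one_eq_span, finrank_span_singleton one_ne_zero]
  have hboundFq := (of v).card_mul_finrank_le_finrank_subspaceSubcode hvF 1
  have hboundF := (of v).card_mul_finrank_le_finrank_subspaceSubcode hvF F
  have hFF := Nat.mul_le_mul_left k (finrank_mul_self_le_three hF2 h1F)
  rw [mul_one, hone] at hboundFq
  simp only [Fintype.card_fin, hF2, hDk] at hrank hboundFq hboundF
  exact ⟨by omega, ⟨_, coe_subspaceSubcode _ 1, by omega⟩,
    ⟨_, coe_subspaceSubcode _ F, by omega⟩⟩

/-- If `D ⊆ L^{n+t}` is a `k`-dimensional `L`-subspace spanned by `k`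
vectors with coordinates in a 2-dimensional subspace `F ∋ 1`, and `n = 2k`, then the
dual `D^⊥` has `L`-dimension `n+t−k`, the codewords of `D^⊥` with support in `F_q`
form an `F_q`-subspace of dimension at least `t`, and those with support in `F` form
an `F_q`-subspace of dimension at least `n−k+2t`. -/
theorem stmt_5 {Fq L : Type*} [Field Fq] [Fintype Fq] [Field L] [Algebra Fq L]
    [FiniteDimensional Fq L]
    (n k t : ℕ) (hn2k : n = 2 * k)
    (F : Submodule Fq L) (hF2 : Module.finrank Fq ↥F = 2) (h1F : (1 : L) ∈ F)
    (D : Submodule L (Fin (n + t) → L))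
    (hDk : Module.finrank L ↥D = k)
    (hDspan : ∃ v : Fin k → (Fin (n + t) → L),
      (∀ i j, v i j ∈ F) ∧ Submodule.span L (Set.range v) = D)
    (Dperp : Submodule L (Fin (n + t) → L))
    (hDperp : (Dperp : Set (Fin (n + t) → L)) =
      {x : Fin (n + t) → L | ∀ c ∈ D, ∑ i, x i * c i = 0}) :
    Module.finrank L ↥Dperp = n + t - k ∧
    (∃ S1 : Submodule Fq (Fin (n + t) → L),
      (S1 : Set (Fin (n + t) → L)) =
        {c : Fin (n + t) → L | c ∈ Dperp ∧ ∀ i, c i ∈ (1 : Submodule Fq L)} ∧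
      t ≤ Module.finrank Fq ↥S1) ∧
    (∃ S2 : Submodule Fq (Fin (n + t) → L),
      (S2 : Set (Fin (n + t) → L)) =
        {c : Fin (n + t) → L | c ∈ Dperp ∧ ∀ i, c i ∈ F} ∧
      n - k + 2 * t ≤ Module.finrank Fq ↥S2) :=
  stmt_5_general n k t hn2k F hF2 h1F D hDk hDspan Dperp hDperp
end

section
/- Let F be an F_q-subspace of L = F_{q^m} with dim_{F_q} F = 2 and 1 ∈ F. Let W be an L-subspace of L^{n+t} of L-dimension n+t−k that admits a basis consisting of t vectors all of whose coordinates lie in F_q together with n−k vectors all of whose coordinates lie in F. Then there exist a matrix H′ ∈ L^{(n+t−k)×(n+t)} whose rows form a basis of W, an invertible (n+t)×(n+t) matrix P with entries in F_q, and an invertible (n+t−k)×(n+t−k) matrix S over L, such that S·H′·P is the block-diagonal matrix [[I_t, 0],[0, R]], where R is an (n−k)×n matrix over L all of whose entries lie in an F_q-subspace of L of dimension at most 2. -/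
/-!
The rows with coordinates in `F_q` extend to a basis of `F_q^{n+t}`; the inverse `P` of the matrix
of that basis sends them to the first `t` unit vectors. Because `P` has entries in `F_q`, the
remaining rows, multiplied by `P`, still have their coordinates in the `F_q`-subspace `F`. The
block below the identity is then cleared by the row operation `S = [[I, 0], [-X, I]]`.
-/

open Matrix

theorem Matrix.submatrix_left_mul {l m n p α : Type*} [Fintype n] [Mul α] [AddCommMonoid α]
    (M : Matrix m n α) (N : Matrix n p α) (e : l → m) :
    M.submatrix e id * N = (M * N).submatrix e id :=
  rfl

theorem Matrix.mul_submatrix_right {m n p q α : Type*} [Fintype n] [Mul α] [AddCommMonoid α]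
    (M : Matrix m n α) (N : Matrix n p α) (e : q → p) :
    M * N.submatrix id e = (M * N).submatrix id e :=
  rfl

theorem Module.Basis.sumExtend_apply_inl {K V ι : Type*} [Field K] [AddCommGroup V] [Module K V]
    {v : ι → V} (hv : LinearIndependent K v) (i : ι) :
    Module.Basis.sumExtend hv (Sum.inl i) = v i := by
  simp only [Module.Basis.sumExtend, Module.Basis.reindex_apply, Module.Basis.extend_apply_self]
  rfl

theorem LinearIndependent.exists_basis_sum {K V ι ι' : Type*} [Field K] [AddCommGroup V]
    [Module K V] [FiniteDimensional K V] [Finite ι']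
    (hrank : Module.finrank K V = Nat.card ι + Nat.card ι')
    {v : ι → V} (hv : LinearIndependent K v) :
    ∃ b : Module.Basis (ι ⊕ ι') K V, ∀ i, b (Sum.inl i) = v i := by
  let b₀ := Module.Basis.sumExtend hv
  have : Finite (ι ⊕ Module.Basis.sumExtendIndex hv) := Module.Finite.finite_basis b₀
  have : Finite ι := .of_injective _ (Sum.inl_injective (β := Module.Basis.sumExtendIndex hv))
  have : Finite (Module.Basis.sumExtendIndex hv) := .of_injective _ (Sum.inr_injective (α := ι))
  have hcard := Module.finrank_eq_nat_card_basis b₀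
  rw [Nat.card_sum, hrank] at hcard
  obtain ⟨e⟩ := Finite.card_eq.1 (Nat.add_left_cancel hcard).symm
  exact ⟨b₀.reindex ((Equiv.refl ι).sumCongr e), fun i => by
    simp [b₀, Module.Basis.sumExtend_apply_inl]⟩

theorem Matrix.exists_isUnit_mul_eq_fromCols_one_zero {K κ ι ι' : Type*} [Field K] [Fintype κ]
    [DecidableEq κ] [Fintype ι] [DecidableEq ι] [Fintype ι'] (e : κ ≃ ι ⊕ ι')
    (U : Matrix ι κ K) (hU : LinearIndependent K fun i => U i) :
    ∃ P : Matrix κ κ K, IsUnit P ∧ U * P = (fromCols (1 : Matrix ι ι K) 0).submatrix id e := by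
  obtain ⟨b, hb⟩ := hU.exists_basis_sum (ι' := ι') (by
    rw [Module.finrank_fintype_fun_eq_card, ← Nat.card_eq_fintype_card, Nat.card_congr e,
      Nat.card_sum])
  let B : Matrix κ κ K := of fun c => b (e c)
  have hB : IsUnit B :=
    linearIndependent_rows_iff_isUnit.1 (b.linearIndependent.comp e e.injective)
  have hUB : U = B.submatrix (e.symm ∘ Sum.inl) id := by
    ext i c
    simp [B, hb]
  refine ⟨B⁻¹, isUnit_nonsing_inv_iff.2 hB, ?_⟩
  rw [hUB, submatrix_left_mul, mul_nonsing_inv B ((isUnit_iff_isUnit_det B).1 hB)]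
  ext i c
  rcases hc : e c with j | j <;> simp [one_apply, fromCols, Equiv.symm_apply_eq, hc]

theorem Matrix.mul_map_algebraMap_apply_mem {K L m n p : Type*} [CommSemiring K]
    [CommSemiring L] [Algebra K L] [Fintype n] {V : Matrix m n L} {G : Submodule K L}
    (hV : ∀ i j, V i j ∈ G) (P : Matrix n p K) (i : m) (j : p) :
    (V * P.map (algebraMap K L)) i j ∈ G :=
  G.sum_mem fun l _ => by
    simpa only [map_apply, mul_comm, Algebra.smul_def] using G.smul_mem (P l j) (hV i l)

theorem Matrix.linearIndependent_rows_of_map_algebraMap {K L ι κ : Type*} [Field K] [Field L]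
    [Algebra K L] {U : Matrix ι κ K}
    (hU : LinearIndependent L fun i => U.map (algebraMap K L) i) :
    LinearIndependent K fun i => U i :=
  (hU.restrict_scalars' K).of_comp (LinearMap.compLeft (Algebra.linearMap K L) κ)

theorem Matrix.isUnit_fromBlocks_one_zero_one {L ι ι' : Type*} [CommRing L] [Fintype ι]
    [DecidableEq ι] [Fintype ι'] [DecidableEq ι'] (X : Matrix ι' ι L) :
    IsUnit (fromBlocks (1 : Matrix ι ι L) 0 X (1 : Matrix ι' ι' L)) := by
  simp [isUnit_iff_isUnit_det]

theorem Matrix.exists_isUnit_mul_fromRows_mul_eq_fromBlocks {K L κ ι ι' ιs : Type*} [Field K]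
    [Field L] [Algebra K L] [Fintype κ] [DecidableEq κ] [Fintype ι] [DecidableEq ι] [Fintype ι']
    [Fintype ιs] [DecidableEq ιs] (e : κ ≃ ι ⊕ ι')
    (U : Matrix ι κ K) (hU : LinearIndependent K fun i => U i)
    (V : Matrix ιs κ L) {G : Submodule K L} (hV : ∀ i j, V i j ∈ G) :
    ∃ (P : Matrix κ κ K) (S : Matrix (ι ⊕ ιs) (ι ⊕ ιs) L) (R : Matrix ιs ι' L),
      IsUnit P ∧ IsUnit S ∧ (∀ i j, R i j ∈ G) ∧
      S * fromRows (U.map (algebraMap K L)) V * P.map (algebraMap K L) =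
        (fromBlocks 1 0 0 R).submatrix id e := by
  obtain ⟨P, hP, hUP⟩ := exists_isUnit_mul_eq_fromCols_one_zero e U hU
  set VP := (V * P.map (algebraMap K L)).submatrix id e.symm
  have hM : fromRows (U.map (algebraMap K L)) V * P.map (algebraMap K L) =
      (fromBlocks 1 0 VP.toCols₁ VP.toCols₂).submatrix id e := by
    rw [fromRows_mul, ← Matrix.map_mul, hUP, ← fromRows_fromCols_eq_fromBlocks, fromCols_toCols]
    ext (i | i) c
    · rcases hc : e c with j | j <;> simp [hc, one_apply, apply_ite (algebraMap K L)]
    · simp [VP]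
  refine ⟨P, fromBlocks 1 0 (-VP.toCols₁) 1, VP.toCols₂, hP, isUnit_fromBlocks_one_zero_one _,
    fun i j => mul_map_algebraMap_apply_mem hV P i _, ?_⟩
  rw [Matrix.mul_assoc, hM, mul_submatrix_right, fromBlocks_multiply]
  simp

/-- If an `L`-subspace `W ⊆ L^{n+t}` of dimension `n+t−k` has a basis
made of `t` vectors with coordinates in `F_q` and `n−k` vectors with coordinates in a
2-dimensional subspace `F ∋ 1`, then some parity-check-type matrix `H'` whose rows
form a basis of `W` satisfies `S·H'·P = [[I_t, 0], [0, R]]` with `P` invertible over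
`F_q`, `S` invertible over `L`, and `R` homogeneous of weight at most 2. -/
theorem stmt_6 {Fq L : Type*} [Field Fq] [Field L] [Algebra Fq L]
    (n k t : ℕ) (hkn : k ≤ n)
    (F : Submodule Fq L) (hF2 : Module.finrank Fq ↥F = 2)
    (W : Submodule L (Fin (n + t) → L))
    (hbasis : ∃ (u : Fin t → (Fin (n + t) → L)) (v : Fin (n - k) → (Fin (n + t) → L)),
      (∀ i j, u i j ∈ (1 : Submodule Fq L)) ∧ (∀ i j, v i j ∈ F) ∧
      LinearIndependent L (Sum.elim u v) ∧
      Submodule.span L (Set.range (Sum.elim u v)) = W) :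
    ∃ (H' : Matrix (Fin (n + t - k)) (Fin (n + t)) L)
      (P : Matrix (Fin (n + t)) (Fin (n + t)) Fq)
      (S : Matrix (Fin (n + t - k)) (Fin (n + t - k)) L)
      (R : Matrix (Fin (n - k)) (Fin n) L)
      (G : Submodule Fq L),
      LinearIndependent L (fun i => H' i) ∧
      Submodule.span L (Set.range fun i => H' i) = (W : Submodule L (Fin (n + t) → L)) ∧
      IsUnit P ∧ IsUnit S ∧
      Module.finrank Fq ↥G ≤ 2 ∧ (∀ i j, R i j ∈ G) ∧
      S * H' * P.map (algebraMap Fq L) =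
        (Matrix.fromBlocks (1 : Matrix (Fin t) (Fin t) L) 0 0 R).submatrix
          (fun i => finSumFinEquiv.symm (finCongr (by omega : n + t - k = t + (n - k)) i))
          (fun j => finSumFinEquiv.symm (finCongr (by omega : n + t = t + n) j)) := by
  obtain ⟨u, v, hu, hv, hli, hspan⟩ := hbasis
  choose U hU using fun i j => Submodule.mem_one.1 (hu i j)
  have hUu : (of U).map (algebraMap Fq L) = of u := by ext i j; exact hU i j
  let eR := (finCongr (by omega : n + t - k = t + (n - k))).trans finSumFinEquiv.symm
  let eC := (finCongr (by omega : n + t = t + n)).trans finSumFinEquiv.symm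
  have hUli : LinearIndependent Fq fun i => of U i :=
    linearIndependent_rows_of_map_algebraMap (by rw [hUu]; exact hli.comp _ Sum.inl_injective)
  obtain ⟨P, S, R, hP, hS, hR, hSHP⟩ :=
    exists_isUnit_mul_fromRows_mul_eq_fromBlocks eC (of U) hUli (of v) hv
  rw [hUu] at hSHP
  refine ⟨(fromRows (of u) (of v)).submatrix eR id, P, S.submatrix eR eR, R, F,
    hli.comp eR eR.injective, ?_, hP, (isUnit_submatrix_equiv eR eR).2 hS, hF2.le, hR, ?_⟩
  · change Submodule.span L (Set.range (Sum.elim u v ∘ eR)) = W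
    rw [eR.surjective.range_comp, hspan]
  · rw [submatrix_mul_equiv, submatrix_left_mul, hSHP]
    rfl
end

section
/- Let H_pub ∈ L^{(n−k)×(n+t)} and H′ ∈ L^{(n+t−k)×(n+t)} be matrices over L = F_{q^m} such that every x ∈ L^{n+t} with H′·xᵀ = 0 also satisfies H_pub·xᵀ = 0. Suppose S is an invertible (n+t−k)×(n+t−k) matrix over L and P an invertible (n+t)×(n+t) matrix over F_q with S·H′·P = [[I_t, 0],[0, R]] for some R ∈ L^{(n−k)×n}. Let s ∈ L^{n−k} and y ∈ L^{n+t} satisfy H_pub·yᵀ = sᵀ. Set y′ = y·(P^{−1})ᵀ and s′ = (S·H′·P)·y′ᵀ; write s′ = (s′₁, s′₂) with s′₁ ∈ L^t its first t coordinates and s′₂ ∈ L^{n−k} its last n−k coordinates. If e′ ∈ L^n satisfies R·e′ᵀ = s′₂ᵀ, then the vector e = (s′₁, e′)·Pᵀ satisfies H_pub·eᵀ = sᵀ. -/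
/-- Correctness of the forged-signature algorithm: if the kernel of `H'`
is contained in the kernel of `H_pub`, `S·H'·P = [[I_t,0],[0,R]]`, `H_pub·yᵀ = sᵀ`,
`y' = y·(P⁻¹)ᵀ`, `s' = (S·H'·P)·y'ᵀ = (s'₁, s'₂)`, and `R·e'ᵀ = s'₂ᵀ`, then
`e = (s'₁, e')·Pᵀ` satisfies `H_pub·eᵀ = sᵀ`. -/
theorem stmt_7 {Fq L : Type*} [Field Fq] [Fintype Fq] [Field L] [Algebra Fq L]
    (n k t : ℕ) (hkn : k ≤ n)
    (Hpub : Matrix (Fin (n - k)) (Fin (n + t)) L)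
    (H' : Matrix (Fin (n + t - k)) (Fin (n + t)) L)
    (hker : ∀ x : Fin (n + t) → L, H'.mulVec x = 0 → Hpub.mulVec x = 0)
    (S : Matrix (Fin (n + t - k)) (Fin (n + t - k)) L) (hS : IsUnit S)
    (P : Matrix (Fin (n + t)) (Fin (n + t)) Fq) (hP : IsUnit P)
    (R : Matrix (Fin (n - k)) (Fin n) L)
    (hblock : S * H' * P.map (algebraMap Fq L) =
      (Matrix.fromBlocks (1 : Matrix (Fin t) (Fin t) L) 0 0 R).submatrix
        (fun i => finSumFinEquiv.symm (finCongr (by omega : n + t - k = t + (n - k)) i))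
        (fun j => finSumFinEquiv.symm (finCongr (by omega : n + t = t + n) j)))
    (s : Fin (n - k) → L) (y : Fin (n + t) → L)
    (hy : Hpub.mulVec y = s)
    (y' : Fin (n + t) → L)
    (hy' : y' = ((P.map (algebraMap Fq L))⁻¹).mulVec y)
    (s' : Fin (n + t - k) → L)
    (hs' : s' = (S * H' * P.map (algebraMap Fq L)).mulVec y')
    (s1 : Fin t → L)
    (hs1 : s1 = fun i => s'
      (finCongr (by omega : t + (n - k) = n + t - k) (finSumFinEquiv (Sum.inl i))))
    (s2 : Fin (n - k) → L)
    (hs2 : s2 = fun i => s'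
      (finCongr (by omega : t + (n - k) = n + t - k) (finSumFinEquiv (Sum.inr i))))
    (e' : Fin n → L) (he' : R.mulVec e' = s2)
    (e : Fin (n + t) → L)
    (he : e = (P.map (algebraMap Fq L)).mulVec
      (fun j => Sum.elim s1 e'
        (finSumFinEquiv.symm (finCongr (by omega : n + t = t + n) j)))) :
    Hpub.mulVec e = s := by
  have h1 : n + t - k = t + (n - k) := by omega
  have h2 : n + t = t + n := by omega
  set P' : Matrix (Fin (n + t)) (Fin (n + t)) L := P.map (algebraMap Fq L) with hP'def
  have hP' : IsUnit P' := hP.map (algebraMap Fq L).mapMatrix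
  have hP'det : IsUnit P'.det := (Matrix.isUnit_iff_isUnit_det _).mp hP'
  have hSdet : IsUnit S.det := (Matrix.isUnit_iff_isUnit_det _).mp hS
  set z : Fin (n + t) → L := fun j => Sum.elim s1 e'
      (finSumFinEquiv.symm (finCongr h2 j)) with hz
  -- y = P' *ᵥ y'
  have hyy' : P'.mulVec y' = y := by
    rw [hy', Matrix.mulVec_mulVec, Matrix.mul_nonsing_inv _ hP'det, Matrix.one_mulVec]
  set M := S * H' * P' with hM
  -- compute M *ᵥ z = s'
  let e₁ : Fin (n + t - k) ≃ Fin t ⊕ Fin (n - k) := (finCongr h1).trans finSumFinEquiv.symm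
  let e₂ : Fin (n + t) ≃ Fin t ⊕ Fin n := (finCongr h2).trans finSumFinEquiv.symm
  have hMz : M.mulVec z = s' := by
    have hform : M = (Matrix.fromBlocks (1 : Matrix (Fin t) (Fin t) L) 0 0 R).submatrix e₁ e₂ :=
      hblock
    rw [hform]
    have hzc : z = Sum.elim s1 e' ∘ e₂ := rfl
    rw [hzc, Matrix.submatrix_mulVec_equiv]
    funext i
    have : (Sum.elim s1 e' ∘ ⇑e₂) ∘ ⇑e₂.symm = Sum.elim s1 e' := by
      funext x; simp
    rw [this, Matrix.fromBlocks_mulVec]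
    simp only [Function.comp_apply, Matrix.one_mulVec, Matrix.zero_mulVec, add_zero, zero_add,
      he', Matrix.mulVec_zero]
    have hs1' : ∀ i, s1 i = s' (e₁.symm (Sum.inl i)) := by
      intro i; rw [hs1]; rfl
    have hs2' : ∀ i, s2 i = s' (e₁.symm (Sum.inr i)) := by
      intro i; rw [hs2]; rfl
    rcases hi : e₁ i with a | b <;>
      simp only [hi, Sum.elim_inl, Sum.elim_inr, Sum.elim_comp_inl, Sum.elim_comp_inr]
    · rw [hs1' a, ← hi, Equiv.symm_apply_apply]
    · rw [he'] at *
      rw [hs2' b, ← hi, Equiv.symm_apply_apply]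
  -- M *ᵥ y' = s'
  have hMy' : M.mulVec y' = s' := hs'.symm
  -- H' *ᵥ e = H' *ᵥ y
  have he2 : e = P'.mulVec z := he
  have hSH : ∀ v w : Fin (n + t) → L, P'.mulVec v = w →
      (S * H').mulVec w = M.mulVec v := by
    intro v w hvw
    rw [← hvw, hM, Matrix.mulVec_mulVec]
  have hH'e : (S * H').mulVec e = s' := by
    rw [hSH z e he2.symm, hMz]
  have hH'y : (S * H').mulVec y = s' := by
    rw [hSH y' y hyy', hMy']
  have hcancel : H'.mulVec e = H'.mulVec y := by
    have h := hH'e.trans hH'y.symm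
    rw [← Matrix.mulVec_mulVec, ← Matrix.mulVec_mulVec] at h
    have h2 := congrArg (S⁻¹.mulVec) h
    simpa [Matrix.mulVec_mulVec, ← Matrix.mul_assoc, Matrix.nonsing_inv_mul _ hSdet] using h2
  have hker' : Hpub.mulVec (e - y) = 0 := by
    apply hker
    rw [Matrix.mulVec_sub, hcancel, sub_self]
  rw [Matrix.mulVec_sub, sub_eq_zero] at hker'
  rw [hker', hy]
end

section
/- Let (n_j), (k_j), (m_j), (w_j), (d_j) be sequences of positive integers with k_j ≤ n_j and n_j → ∞. Assume: (i) there exist constants 0 < c₁ ≤ c₂ with c₁·n_j ≤ m_j ≤ c₂·n_j for all j; (ii) there is a constant C > 0 with w_j·d_j ≤ C·n_j for all j; (iii) d_j → ∞ as j → ∞; (iv) there is a real sequence ε_j → 0 such that w_j ≥ (1−ε_j)·(m_j + n_j − √((m_j − n_j)² + 4·k_j·m_j))/2 for all j. Then (n_j − k_j)/n_j → 0 as j → ∞. -/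
open Filter

/-- Under the asymptotic constraints of the rank-metric IBE scheme
(`m_j = Θ(n_j)`, `w_j·d_j = O(n_j)`, `d_j → ∞`, and `w_j` at least the rank-metric
Gilbert–Varshamov distance up to a `(1−ε_j)` factor with `ε_j → 0`), the rate defect
`(n_j − k_j)/n_j` tends to `0`. -/
theorem stmt_8 (n k m w d : ℕ → ℕ)
    (hpos : ∀ j, 0 < n j ∧ 0 < k j ∧ 0 < m j ∧ 0 < w j ∧ 0 < d j)
    (hkn : ∀ j, k j ≤ n j)
    (hn : Tendsto n atTop atTop)
    (c₁ c₂ : ℝ) (hc₁ : 0 < c₁) (hc₁₂ : c₁ ≤ c₂)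
    (hm : ∀ j, c₁ * (n j : ℝ) ≤ (m j : ℝ) ∧ (m j : ℝ) ≤ c₂ * (n j : ℝ))
    (C : ℝ) (hC : 0 < C)
    (hwd : ∀ j, (w j : ℝ) * (d j : ℝ) ≤ C * (n j : ℝ))
    (hd : Tendsto d atTop atTop)
    (ε : ℕ → ℝ) (hε : Tendsto ε atTop (nhds 0))
    (hw : ∀ j, (1 - ε j) *
        (((m j : ℝ) + (n j : ℝ) -
            Real.sqrt (((m j : ℝ) - (n j : ℝ)) ^ 2 + 4 * (k j : ℝ) * (m j : ℝ))) / 2)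
      ≤ (w j : ℝ)) :
    Tendsto (fun j => ((n j : ℝ) - (k j : ℝ)) / (n j : ℝ)) atTop (nhds 0) := by
  set K : ℝ := 2 * C * (c₂ + 1) / c₁ with hKdef
  have hg : Tendsto (fun j => K / (d j : ℝ)) atTop (nhds 0) :=
    Tendsto.div_atTop tendsto_const_nhds (tendsto_natCast_atTop_atTop.comp hd)
  have hεev : ∀ᶠ j in atTop, ε j ≤ 1 / 2 :=
    hε.eventually (eventually_le_nhds (by norm_num))
  refine squeeze_zero' ?_ ?_ hg
  · filter_upwards with j
    have h1 : (k j : ℝ) ≤ (n j : ℝ) := by exact_mod_cast hkn j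
    have h2 : (0 : ℝ) ≤ (n j : ℝ) := Nat.cast_nonneg _
    exact div_nonneg (by linarith) h2
  · filter_upwards [hεev] with j hεj
    obtain ⟨hn0, hk0, hm0, hw0, hd0⟩ := hpos j
    have hN : (0 : ℝ) < (n j : ℝ) := by exact_mod_cast hn0
    have hD : (0 : ℝ) < (d j : ℝ) := by exact_mod_cast hd0
    have hK' : (0 : ℝ) < (k j : ℝ) := by exact_mod_cast hk0
    have hkN : (k j : ℝ) ≤ (n j : ℝ) := by exact_mod_cast hkn j
    obtain ⟨hm1, hm2⟩ := hm j
    set N := (n j : ℝ)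
    set Kk := (k j : ℝ)
    set M := (m j : ℝ)
    set W := (w j : ℝ)
    set D := (d j : ℝ)
    set S := Real.sqrt ((M - N) ^ 2 + 4 * Kk * M) with hSdef
    have hM : (0 : ℝ) < M := lt_of_lt_of_le (by positivity) hm1
    have hS0 : 0 ≤ S := Real.sqrt_nonneg _
    have hS2 : S ^ 2 = (M - N) ^ 2 + 4 * Kk * M := Real.sq_sqrt (by positivity)
    have hSle : S ≤ M + N := by
      have h1 : (M - N) ^ 2 + 4 * Kk * M ≤ (M + N) ^ 2 := by nlinarith
      calc S ≤ Real.sqrt ((M + N) ^ 2) := Real.sqrt_le_sqrt h1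
        _ = M + N := Real.sqrt_sq (by linarith)
    have hprod : (M + N - S) * (M + N + S) = 4 * M * (N - Kk) := by
      linear_combination -hS2
    have hGVnn : 0 ≤ (M + N - S) / 2 := by linarith
    -- lower bound on GV term
    have hGVlb : 2 * c₁ * (N - Kk) ≤ (M + N - S) * (c₂ + 1) := by
      have h1 : M + N + S ≤ 2 * (c₂ + 1) * N := by nlinarith
      have h2 : 4 * c₁ * N * (N - Kk) ≤ 4 * M * (N - Kk) := by nlinarith
      have step1 : 4 * c₁ * N * (N - Kk) ≤ (M + N - S) * (M + N + S) := by
        rw [hprod]; exact h2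
      have step2 : (M + N - S) * (M + N + S) ≤ (M + N - S) * (2 * (c₂ + 1) * N) :=
        mul_le_mul_of_nonneg_left h1 (by linarith : (0:ℝ) ≤ M + N - S)
      have hA' : (2 * N) * (2 * c₁ * (N - Kk)) ≤ (2 * N) * ((M + N - S) * (c₂ + 1)) := by
        have e1 : (2 * N) * (2 * c₁ * (N - Kk)) = 4 * c₁ * N * (N - Kk) := by ring
        have e2 : (2 * N) * ((M + N - S) * (c₂ + 1)) = (M + N - S) * (2 * (c₂ + 1) * N) := by
          ring
        rw [e1, e2]; linarith
      exact le_of_mul_le_mul_left hA' (by linarith)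
    -- w bounds
    have hwlb : (M + N - S) / 2 / 2 ≤ W := by
      calc (M + N - S) / 2 / 2 = (1 - 1/2) * ((M + N - S) / 2) := by ring
        _ ≤ (1 - ε j) * ((M + N - S) / 2) := by
            apply mul_le_mul_of_nonneg_right _ hGVnn
            linarith
        _ ≤ W := hw j
    have hwub : W * D ≤ C * N := hwd j
    -- conclude
    have h4 : c₁ * (N - Kk) ≤ 2 * W * (c₂ + 1) := by
      have := mul_le_mul_of_nonneg_right (show M + N - S ≤ 4 * W by linarith)
        (show (0:ℝ) ≤ c₂ + 1 by linarith)
      linarith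
    have hKey : (N - Kk) * D * c₁ ≤ 2 * C * (c₂ + 1) * N := by
      have t1 := mul_le_mul_of_nonneg_right h4 (le_of_lt hD)
      have t2 := mul_le_mul_of_nonneg_left hwub (show (0:ℝ) ≤ 2 * (c₂ + 1) by linarith)
      nlinarith [t1, t2]
    rw [div_le_div_iff₀ hN hD, hKdef, div_mul_eq_mul_div, le_div_iff₀ hc₁]
    linarith [hKey]
end

section
/- Let ε, ε′ > 0 and a, c > 0 be constants. Let (n_j), (k_j), (w_j), (d_j) be sequences of positive integers with n_j → ∞, k_j ≤ n_j, w_j ≤ n_j, d_j ≥ a·n_j^{ε}, w_j ≥ a·n_j^{ε′}, w_j·d_j ≤ c·n_j, and k_j/n_j ≥ 1 − h(w_j/n_j) for all j, where h is the binary entropy function. Then there exists a constant C > 0 such that, for all sufficiently large j, log₂ C(n_j, d_j) − log₂ C(k_j, d_j) ≤ C·log₂ n_j, where C(a,b) denotes the binomial coefficient. In other words, the ratio C(n_j,d_j)/C(k_j,d_j), which is the complexity of the Prange decoding algorithm up to polynomial factors, is bounded by a polynomial in n_j. -/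
/-!
Prange's ratio `C(n,d)/C(k,d) = ∏_{i<d} (n-i)/(k-i)` has increasing factors, so it is at most
`((n-d+1)/(k-d+1))^d` and its logarithm is at most `d(n-k)/(k-d+1)`. Since
`h(x) ≤ x log₂(1/x) + x/ln 2`, the Gilbert–Varshamov condition gives `n - k = O(w log n)`, and then
`wd ≤ cn` makes the numerator `d(n-k) = O(n log n)`. Finally `d ≥ a n^ε` forces `w = O(n^{1-ε})`
and `w ≥ a n^{ε'}` forces `d = O(n^{1-ε'})`, so `n - k` and `d` are eventually at most `n/4` and the
denominator `k - d + 1` is at least `n/2`.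
-/

open Filter

/-- The binary entropy function `h(x) = −x·log₂ x − (1−x)·log₂(1−x)`
(with `h(0) = h(1) = 0`, since `Real.logb 2 0 = 0`). -/
noncomputable def binEntropy2 (x : ℝ) : ℝ :=
  -x * Real.logb 2 x - (1 - x) * Real.logb 2 (1 - x)

open Real

theorem Nat.descFactorial_mul_pow_le {n k d : ℕ} (hdk : d ≤ k) (hkn : k ≤ n) :
    n.descFactorial d * (k - d + 1) ^ d ≤ k.descFactorial d * (n - d + 1) ^ d := by
  have factorwise : ∀ i ∈ Finset.range d, (n - i) * (k - d + 1) ≤ (k - i) * (n - d + 1) := by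
    intro i hi
    have hid : i < d := Finset.mem_range.1 hi
    zify [hid.le.trans hdk, (hid.le.trans hdk).trans hkn, hdk, hdk.trans hkn]
    have hnk : (0 : ℤ) ≤ n - k := by omega
    have hdi : (0 : ℤ) ≤ d - 1 - i := by omega
    nlinarith [mul_nonneg hnk hdi]
  simpa only [Nat.descFactorial_eq_prod_range, Finset.prod_mul_distrib, Finset.prod_const,
    Finset.card_range] using Finset.prod_le_prod' factorwise

theorem Nat.choose_mul_pow_le {n k d : ℕ} (hdk : d ≤ k) (hkn : k ≤ n) :
    n.choose d * (k - d + 1) ^ d ≤ k.choose d * (n - d + 1) ^ d := by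
  have h := Nat.descFactorial_mul_pow_le hdk hkn
  rw [Nat.descFactorial_eq_factorial_mul_choose, Nat.descFactorial_eq_factorial_mul_choose,
    mul_assoc, mul_assoc] at h
  exact Nat.le_of_mul_le_mul_left h (Nat.factorial_pos d)

theorem Real.log_choose_sub_log_choose_le {n k d : ℕ} (hdk : d ≤ k) (hkn : k ≤ n) :
    log (n.choose d) - log (k.choose d) ≤ d * ((n - k) / (k - d + 1)) := by
  have hK : (0 : ℝ) < k - d + 1 := by
    have : (d : ℝ) ≤ k := by exact_mod_cast hdk
    linarith
  have hN : (0 : ℝ) < n - d + 1 := by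
    have : (k : ℝ) ≤ n := by exact_mod_cast hkn
    linarith
  have hCn : (0 : ℝ) < n.choose d := by exact_mod_cast Nat.choose_pos (hdk.trans hkn)
  have hCk : (0 : ℝ) < k.choose d := by exact_mod_cast Nat.choose_pos hdk
  have hcast : (n.choose d : ℝ) * (k - d + 1) ^ d ≤ k.choose d * (n - d + 1) ^ d := by
    have := (Nat.cast_le (α := ℝ)).2 (Nat.choose_mul_pow_le hdk hkn)
    push_cast [Nat.cast_sub hdk, Nat.cast_sub (hdk.trans hkn)] at this
    exact this
  have hlog := log_le_log (by positivity) hcast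
  rw [log_mul hCn.ne' (by positivity), log_mul hCk.ne' (by positivity), log_pow, log_pow] at hlog
  have hratio : log (n - d + 1) - log (k - d + 1) ≤ (n - k) / (k - d + 1) := by
    rw [← log_div hN.ne' hK.ne']
    calc log ((n - d + 1) / (k - d + 1)) ≤ (n - d + 1) / (k - d + 1) - 1 :=
          log_le_sub_one_of_pos (div_pos hN hK)
      _ = (n - k) / (k - d + 1) := by field_simp; ring
  nlinarith [mul_le_mul_of_nonneg_left hratio (Nat.cast_nonneg (α := ℝ) d)]

theorem Real.binEntropy_le_negMulLog_add {p : ℝ} (hp : p ≤ 1) :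
    binEntropy p ≤ negMulLog p + p := by
  have := negMulLog_le_one_sub_self (x := 1 - p) (by linarith)
  rw [binEntropy_eq_negMulLog_add_negMulLog_one_sub]
  linarith

theorem binEntropy2_eq_binEntropy_div (x : ℝ) : binEntropy2 x = binEntropy x / log 2 := by
  simp only [binEntropy2, binEntropy, logb, log_inv]
  ring

theorem Real.natCast_mul_negMulLog_div_le (w n : ℕ) :
    n * negMulLog ((w : ℝ) / n) ≤ w * log n := by
  rcases Nat.eq_zero_or_pos w with rfl | hw
  · simp
  rcases Nat.eq_zero_or_pos n with rfl | hn
  · simp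
  rw [negMulLog, log_div (by positivity) (by positivity)]
  field_simp
  nlinarith [log_natCast_nonneg w, (Nat.cast_pos (α := ℝ)).2 hw]

theorem natCast_sub_le_of_one_sub_binEntropy2_le {n k w : ℕ} (hn : 0 < n) (hwn : w ≤ n)
    (hGV : 1 - binEntropy2 ((w : ℝ) / n) ≤ (k : ℝ) / n) :
    (n : ℝ) - k ≤ 2 * w * (log n + 1) := by
  have hn' : (0 : ℝ) < n := by exact_mod_cast hn
  have hent : n * binEntropy ((w : ℝ) / n) ≤ w * (log n + 1) := by
    have hp : (w : ℝ) / n ≤ 1 := div_le_one_of_le₀ (by exact_mod_cast hwn) hn'.le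
    calc n * binEntropy ((w : ℝ) / n) ≤ n * (negMulLog ((w : ℝ) / n) + w / n) :=
          mul_le_mul_of_nonneg_left (binEntropy_le_negMulLog_add hp) hn'.le
      _ ≤ w * (log n + 1) := by
          have := natCast_mul_negMulLog_div_le w n
          rw [mul_add, mul_div_cancel₀ _ hn'.ne']
          linarith
  rw [binEntropy2_eq_binEntropy_div] at hGV
  have hscaled : ((n : ℝ) - k) * log 2 ≤ w * (log n + 1) := by
    have hlog2 : 0 < log 2 := log_pos one_lt_two
    field_simp at hGV
    linarith
  have hrhs : 0 ≤ (w : ℝ) * (log n + 1) := by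
    have := log_natCast_nonneg n
    positivity
  rcases le_or_gt ((n : ℝ) - k) 0 with hnk | hnk
  · linarith
  · nlinarith [log_two_gt_d9]

theorem log_choose_sub_log_choose_le_of_le_quarter {n k w d : ℕ} {c : ℝ} (hkn : k ≤ n)
    (hlog : 1 ≤ log n) (hwd : (w : ℝ) * d ≤ c * n) (hgap : (n : ℝ) - k ≤ 2 * w * (log n + 1))
    (hd : (d : ℝ) ≤ n / 4) (hk : (n : ℝ) - k ≤ n / 4) :
    log (n.choose d) - log (k.choose d) ≤ 8 * c * log n := by
  have hdk : d ≤ k := by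
    have : (d : ℝ) ≤ k := by linarith
    exact_mod_cast this
  have hK : (n : ℝ) / 2 ≤ k - d + 1 := by linarith
  have hn : (0 : ℝ) < n := Nat.cast_pos.2 <| Nat.pos_of_ne_zero <| by rintro rfl; norm_num at hlog
  have hcn : 0 ≤ c * n := le_trans (by positivity) hwd
  have hnum : (d : ℝ) * (n - k) ≤ 4 * c * n * log n := by
    calc (d : ℝ) * (n - k) ≤ d * (2 * w * (log n + 1)) :=
          mul_le_mul_of_nonneg_left hgap (Nat.cast_nonneg d)
      _ = 2 * (w * d) * (log n + 1) := by ring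
      _ ≤ 2 * (c * n) * (log n + 1) := by gcongr
      _ ≤ 4 * c * n * log n := by nlinarith
  calc log (n.choose d) - log (k.choose d) ≤ d * ((n - k) / (k - d + 1)) :=
        log_choose_sub_log_choose_le hdk hkn
    _ = d * (n - k) / (k - d + 1) := by ring
    _ ≤ 4 * c * n * log n / (n / 2) := by
        apply div_le_div₀ (by nlinarith [mul_nonneg hcn (by linarith : 0 ≤ log n)]) hnum
          (by positivity) hK
    _ = 8 * c * log n := by field_simp; ring

theorem eventually_mul_log_add_one_le_rpow {ε a : ℝ} (hε : 0 < ε) (ha : 0 < a) (C : ℝ) :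
    ∀ᶠ x : ℝ in atTop, C * (log x + 1) ≤ a * x ^ ε := by
  have hone : (fun _ => (1 : ℝ)) =o[atTop] fun x : ℝ => x ^ ε :=
    (Asymptotics.isLittleO_one_left_iff ℝ).2 <|
      (tendsto_rpow_atTop hε).congr' <| by
        filter_upwards [eventually_ge_atTop 0] with x hx
        rw [norm_of_nonneg (rpow_nonneg hx ε)]
  have hlo := (((isLittleO_log_rpow_atTop hε).add hone).const_mul_left C).bound ha
  filter_upwards [hlo, eventually_ge_atTop 0] with x hx hx0
  rw [norm_of_nonneg (rpow_nonneg hx0 ε)] at hx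
  exact (le_abs_self _).trans hx

theorem stmt_9_general (ε ε' a c : ℝ) (hε : 0 < ε) (hε' : 0 < ε') (ha : 0 < a) (hc : 0 < c)
    (n k w d : ℕ → ℕ)
    (hn : Tendsto n atTop atTop)
    (hkn : ∀ j, k j ≤ n j) (hwn : ∀ j, w j ≤ n j)
    (hd : ∀ j, a * (n j : ℝ) ^ ε ≤ (d j : ℝ))
    (hw : ∀ j, a * (n j : ℝ) ^ ε' ≤ (w j : ℝ))
    (hwd : ∀ j, (w j : ℝ) * (d j : ℝ) ≤ c * (n j : ℝ))
    (hGV : ∀ j, 1 - binEntropy2 ((w j : ℝ) / (n j : ℝ)) ≤ (k j : ℝ) / (n j : ℝ)) :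
    ∃ C > (0 : ℝ), ∀ᶠ j in atTop,
      Real.logb 2 ((n j).choose (d j) : ℝ) - Real.logb 2 ((k j).choose (d j) : ℝ)
        ≤ C * Real.logb 2 (n j : ℝ) := by
  refine ⟨8 * c, by positivity, ?_⟩
  have hnR : Tendsto (fun j => (n j : ℝ)) atTop atTop := tendsto_natCast_atTop_atTop.comp hn
  filter_upwards [hnR.eventually (tendsto_log_atTop.eventually_ge_atTop 1),
    hnR.eventually (eventually_mul_log_add_one_le_rpow hε ha (8 * c)),
    hnR.eventually (((tendsto_rpow_atTop hε').const_mul_atTop ha).eventually_ge_atTop (4 * c))]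
    with j hlog hdlarge hwlarge
  have hn0 : 0 < n j := Nat.pos_of_ne_zero fun h => by norm_num [h] at hlog
  have hgap := natCast_sub_le_of_one_sub_binEntropy2_le hn0 (hwn j) (hGV j)
  have hd4 : (d j : ℝ) ≤ n j / 4 := by nlinarith [hw j, hwd j, hwlarge]
  have hk4 : (n j : ℝ) - k j ≤ n j / 4 := by nlinarith [hd j, hwd j, hdlarge, hgap]
  have := log_choose_sub_log_choose_le_of_le_quarter (hkn j) hlog (hwd j) hgap hd4 hk4
  simp only [logb, ← sub_div, mul_div_assoc']
  exact div_le_div_of_nonneg_right this (log_pos one_lt_two).le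

/-- Under the constraints of the Hamming-metric IBE scheme
(`d_j ≥ a·n_j^ε`, `w_j ≥ a·n_j^{ε'}`, `w_j·d_j ≤ c·n_j`, and `k_j/n_j ≥ 1 − h(w_j/n_j)`),
the Prange complexity `C(n_j,d_j)/C(k_j,d_j)` is polynomially bounded:
`log₂ C(n_j,d_j) − log₂ C(k_j,d_j) ≤ C·log₂ n_j` for large `j`. -/
theorem stmt_9 (ε ε' a c : ℝ) (hε : 0 < ε) (hε' : 0 < ε') (ha : 0 < a) (hc : 0 < c)
    (n k w d : ℕ → ℕ)
    (hpos : ∀ j, 0 < n j ∧ 0 < k j ∧ 0 < w j ∧ 0 < d j)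
    (hn : Tendsto n atTop atTop)
    (hkn : ∀ j, k j ≤ n j) (hwn : ∀ j, w j ≤ n j)
    (hd : ∀ j, a * (n j : ℝ) ^ ε ≤ (d j : ℝ))
    (hw : ∀ j, a * (n j : ℝ) ^ ε' ≤ (w j : ℝ))
    (hwd : ∀ j, (w j : ℝ) * (d j : ℝ) ≤ c * (n j : ℝ))
    (hGV : ∀ j, 1 - binEntropy2 ((w j : ℝ) / (n j : ℝ)) ≤ (k j : ℝ) / (n j : ℝ)) :
    ∃ C > (0 : ℝ), ∀ᶠ j in atTop,
      Real.logb 2 ((n j).choose (d j) : ℝ) - Real.logb 2 ((k j).choose (d j) : ℝ)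
        ≤ C * Real.logb 2 (n j : ℝ) :=
  stmt_9_general ε ε' a c hε hε' ha hc n k w d hn hkn hwn hd hw hwd hGV
end
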